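/- arXiv:1810.02203 — 8 statements merged into one kernel-verified Lean document; each statement's English description precedes it below -/
import Mathlib

section
/- Let p be a prime, G a torsion-free abelian group, I an index set, and φ : ⊕_{i∈I} ℤ_(p) → G an injective group homomorphism whose image is a pure subgroup of G. Let e_i ∈ ⊕_{i∈I} ℤ_(p) denote the element which is 1 in coordinate i and 0 elsewhere. Then the family (φ(e_i) + pG)_{i∈I} is linearly independent over the field 𝔽_p in the 𝔽_p-vector space G/pG; in particular, dim_{𝔽_p}(G/pG) ≥ |I|. -/
/-- `H` is a pure subgroup: `nG ∩ H = nH` for every `n : ℕ`. -/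
def AddSubgroup.IsPure {G : Type*} [AddCommGroup G] (H : AddSubgroup G) : Prop :=
  ∀ (n : ℕ), ∀ h ∈ H, (∃ g : G, n • g = h) → ∃ h' ∈ H, n • h' = h

/-- `ℤ_(p)`: the subgroup of `ℚ` of rationals whose (reduced) denominator is coprime to `p`,
i.e. rationals that can be written as `n/m` with `m` coprime to `p`. -/
def ZLoc (p : ℕ) (hp : p.Prime) : AddSubgroup ℚ where
  carrier := {q : ℚ | ¬ p ∣ q.den}
  zero_mem' := by
    simp only [Set.mem_setOf_eq, Rat.den_ofNat]
    exact fun h => hp.one_lt.ne' (Nat.dvd_one.mp h)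
  add_mem' := by
    intro a b ha hb hdvd
    rcases (Nat.Prime.dvd_mul hp).mp (hdvd.trans (Rat.add_den_dvd a b)) with h | h
    · exact ha h
    · exact hb h
  neg_mem' := by
    intro a ha
    simpa only [Set.mem_setOf_eq, Rat.neg_den] using ha

lemma one_mem_ZLoc (p : ℕ) (hp : p.Prime) : (1 : ℚ) ∈ ZLoc p hp := by
  show ¬ p ∣ (1 : ℚ).den
  simp only [Rat.den_ofNat, Nat.dvd_one]
  exact hp.one_lt.ne'

/-- `pG`: the subgroup of multiples of `p` in `G`. -/
def pMul (p : ℕ) (G : Type*) [AddCommGroup G] : AddSubgroup G :=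
  (nsmulAddMonoidHom p : G →+ G).range

/-- `G/pG` is a module (vector space, for `p` prime) over `𝔽_p = ZMod p`. -/
noncomputable instance modPModule (p : ℕ) (G : Type*) [AddCommGroup G] :
    Module (ZMod p) (G ⧸ pMul p G) :=
  QuotientAddGroup.zmodModule (fun x => ⟨x, rfl⟩)


/-!
Since `φ` is injective with pure image, an element of `⊕ ℤ_(p)` whose image lies in `pG` is
already divisible by `p`, so `φ` induces an injective `𝔽_p`-linear map
`(⊕ ℤ_(p)) / p → G / pG`. It therefore suffices to show that the `e i` are independent modulo `p`
in `⊕ ℤ_(p)`. Coordinatewise this says that `n • 1 ∈ p ℤ_(p)` forces `p ∣ n`, which holds because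
`p` does not divide the denominators of elements of `ℤ_(p)`.
-/

open Function

section pMul

variable {p : ℕ} {A G : Type*} [AddCommGroup A] [AddCommGroup G]

lemma map_mem_pMul (f : A →+ G) {a : A} (ha : a ∈ pMul p A) : f a ∈ pMul p G := by
  obtain ⟨x, rfl⟩ := ha
  exact ⟨f x, (map_nsmul f p x).symm⟩

lemma mem_pMul_of_map_mem_pMul {φ : A →+ G} (hinj : Injective φ) (hpure : φ.range.IsPure)
    {a : A} (ha : φ a ∈ pMul p G) : a ∈ pMul p A := by
  obtain ⟨g, hg⟩ := ha
  obtain ⟨-, ⟨x, rfl⟩, hx⟩ := hpure p (φ a) ⟨a, rfl⟩ ⟨g, hg⟩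
  exact ⟨x, hinj (by simpa using hx)⟩

variable (p) in
noncomputable def pMulQuotientMap (φ : A →+ G) : A ⧸ pMul p A →ₗ[ZMod p] G ⧸ pMul p G :=
  (QuotientAddGroup.map _ _ φ fun _ => map_mem_pMul φ).toZModLinearMap p

lemma pMulQuotientMap_mk (φ : A →+ G) (a : A) :
    pMulQuotientMap p φ (QuotientAddGroup.mk a) = QuotientAddGroup.mk (φ a) := rfl

lemma ker_pMulQuotientMap {φ : A →+ G} (hinj : Injective φ) (hpure : φ.range.IsPure) :
    LinearMap.ker (pMulQuotientMap p φ) = ⊥ := by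
  refine LinearMap.ker_eq_bot'.mpr fun x hx => ?_
  induction x using QuotientAddGroup.induction_on with | H a => ?_
  rw [pMulQuotientMap_mk, QuotientAddGroup.eq_zero_iff] at hx
  exact (QuotientAddGroup.eq_zero_iff a).mpr (mem_pMul_of_map_mem_pMul hinj hpure hx)

lemma smul_mk_eq_mk_val_nsmul [NeZero p] (c : ZMod p) (a : A) :
    c • (QuotientAddGroup.mk a : A ⧸ pMul p A) = QuotientAddGroup.mk (c.val • a) := by
  conv_lhs => rw [← ZMod.natCast_zmod_val c, Nat.cast_smul_eq_nsmul]
  rfl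

lemma DirectSum.apply_mem_pMul {ι : Type*} {β : ι → Type*} [∀ i, AddCommGroup (β i)]
    {x : DirectSum ι β} (hx : x ∈ pMul p (DirectSum ι β)) (i : ι) : x i ∈ pMul p (β i) := by
  obtain ⟨y, rfl⟩ := hx
  exact ⟨y i, (DFinsupp.nsmul_apply p y i).symm⟩

end pMul

lemma Rat.prime_dvd_of_mul_eq {p : ℕ} (hp : p.Prime) {q : ℚ} (hq : ¬ p ∣ q.den) {n : ℤ}
    (h : p * q = n) : (p : ℤ) ∣ n := by
  have hnum : (p : ℤ) * q.num = n * q.den := by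
    have : ((p : ℤ) * q.num : ℚ) = n * q.den := by
      rw [← Rat.mul_den_eq_num, ← h]
      push_cast
      ring
    exact_mod_cast this
  refine (Int.Prime.dvd_mul' hp ⟨q.num, hnum.symm⟩).resolve_right fun hden => hq ?_
  exact_mod_cast hden

lemma ZLoc.prime_dvd_of_nsmul_one_mem_pMul {p : ℕ} (hp : p.Prime) {n : ℕ}
    (h : n • (⟨1, one_mem_ZLoc p hp⟩ : ZLoc p hp) ∈ pMul p (ZLoc p hp)) : p ∣ n := by
  obtain ⟨x, hx⟩ := h
  have hq : (p : ℚ) * x = (n : ℤ) := by simpa using congrArg Subtype.val hx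
  exact_mod_cast Rat.prime_dvd_of_mul_eq hp x.2 hq

lemma linearIndependent_mk_directSum_of_one_ZLoc {p : ℕ} (hp : p.Prime) (I : Type*)
    [DecidableEq I] :
    LinearIndependent (ZMod p) fun i : I =>
      (QuotientAddGroup.mk (DirectSum.of (fun _ : I => ZLoc p hp) i ⟨1, one_mem_ZLoc p hp⟩) :
        (DirectSum I fun _ : I => ZLoc p hp) ⧸ pMul p _) := by
  have : NeZero p := ⟨hp.ne_zero⟩
  rw [linearIndependent_iff']
  intro s c hsum i hi
  have hmem : ∑ j ∈ s, (c j).val • DirectSum.of (fun _ : I => ZLoc p hp) j ⟨1, one_mem_ZLoc p hp⟩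
      ∈ pMul p _ := by
    rw [← QuotientAddGroup.eq_zero_iff, ← hsum, QuotientAddGroup.mk_sum]
    simp only [smul_mk_eq_mk_val_nsmul]
  have hcoord := DirectSum.apply_mem_pMul hmem i
  rw [DFinsupp.finsetSum_apply, Finset.sum_eq_single_of_mem i hi fun j _ hji => by
    rw [DFinsupp.nsmul_apply, DirectSum.of_eq_of_ne _ _ _ hji.symm, smul_zero],
    DFinsupp.nsmul_apply, DirectSum.of_eq_same] at hcoord
  rw [← ZMod.natCast_zmod_val (c i), ZMod.natCast_eq_zero_iff]
  exact ZLoc.prime_dvd_of_nsmul_one_mem_pMul hp hcoord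

universe u

theorem linearIndependent_of_pure_embedding_of_directSum_ZLoc_general
    {p : ℕ} (hp : p.Prime) {G : Type u} [AddCommGroup G]
    {I : Type u} [DecidableEq I]
    (φ : (DirectSum I fun _ : I => ↥(ZLoc p hp)) →+ G)
    (hinj : Function.Injective φ) (hpure : φ.range.IsPure)
    (e : I → DirectSum I fun _ : I => ↥(ZLoc p hp))
    (he : ∀ i : I, e i = DirectSum.of (fun _ : I => ↥(ZLoc p hp)) i ⟨1, one_mem_ZLoc p hp⟩) :
    LinearIndependent (ZMod p)
      (fun i : I => (QuotientAddGroup.mk (φ (e i)) : G ⧸ pMul p G)) ∧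
    Cardinal.mk I ≤ Module.rank (ZMod p) (G ⧸ pMul p G) := by
  have : Fact p.Prime := ⟨hp⟩
  obtain rfl : e = _ := funext he
  have hli := (linearIndependent_mk_directSum_of_one_ZLoc hp I).map' (pMulQuotientMap p φ)
    (ker_pMulQuotientMap hinj hpure)
  exact ⟨hli, hli.cardinal_le_rank⟩

/-- If `φ : ⊕_{i ∈ I} ℤ_(p) → G` is an injective homomorphism into a torsion-free abelian
group with pure image, then the images of the canonical basis vectors `e i` are linearly
independent over `𝔽_p` in `G/pG`; in particular `dim_{𝔽_p}(G/pG) ≥ |I|`. -/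
theorem linearIndependent_of_pure_embedding_of_directSum_ZLoc
    {p : ℕ} (hp : p.Prime) {G : Type u} [AddCommGroup G] [NoZeroSMulDivisors ℤ G]
    {I : Type u} [DecidableEq I]
    (φ : (DirectSum I fun _ : I => ↥(ZLoc p hp)) →+ G)
    (hinj : Function.Injective φ) (hpure : φ.range.IsPure)
    (e : I → DirectSum I fun _ : I => ↥(ZLoc p hp))
    (he : ∀ i : I, e i = DirectSum.of (fun _ : I => ↥(ZLoc p hp)) i ⟨1, one_mem_ZLoc p hp⟩) :
    LinearIndependent (ZMod p)
      (fun i : I => (QuotientAddGroup.mk (φ (e i)) : G ⧸ pMul p G)) ∧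
    Cardinal.mk I ≤ Module.rank (ZMod p) (G ⧸ pMul p G) :=
  linearIndependent_of_pure_embedding_of_directSum_ZLoc_general hp φ hinj hpure e he
end

section
/- Every torsion-free abelian group G admits a pure embedding into a torsion-free algebraically compact abelian group, i.e., there exist a torsion-free abelian group H that is algebraically compact and an injective group homomorphism G → H whose image is a pure subgroup of H. -/
/-- A countable system of `ℤ`-linear equations
`∑_{j < len i} coeff i j • x (var i j) = const i` (for `i < ω`). -/
structure LinearSystem (G : Type*) [AddCommGroup G] where
  len : ℕ → ℕ
  coeff : (i : ℕ) → Fin (len i) → ℤ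
  var : (i : ℕ) → Fin (len i) → ℕ
  const : ℕ → G

/-- `x` is a solution of the system `E`. -/
def LinearSystem.IsSolution {G : Type*} [AddCommGroup G] (E : LinearSystem G) (x : ℕ → G) : Prop :=
  ∀ i : ℕ, ∑ j : Fin (E.len i), E.coeff i j • x (E.var i j) = E.const i

/-- Every finite subsystem of `E` has a solution. -/
def LinearSystem.FinitelySolvable {G : Type*} [AddCommGroup G] (E : LinearSystem G) : Prop :=
  ∀ s : Finset ℕ, ∃ x : ℕ → G,
    ∀ i ∈ s, ∑ j : Fin (E.len i), E.coeff i j • x (E.var i j) = E.const i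

/-- `G` is algebraically compact: every countable system of `ℤ`-linear equations over `G`
that is finitely solvable in `G` is solvable in `G`. -/
def IsAlgCompact (G : Type*) [AddCommGroup G] : Prop :=
  ∀ E : LinearSystem G, E.FinitelySolvable → ∃ x : ℕ → G, E.IsSolution x

universe u

/-!
The embedding is the evaluation map `G → Hom(Hom(G, ℝ/ℤ), ℝ/ℤ)` into the double character group.
A character group `Hom(A, ℝ/ℤ)` is algebraically compact because it is a closed subgroup of the
compact group `(ℝ/ℤ)^A`, where finitely solvable systems are solvable by the finite intersection
property. Characters separate the points of every `G / nG`, which makes evaluation injective with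
pure image. Finally, as `G` is torsion-free and `ℝ/ℤ` is divisible, `Hom(G, ℝ/ℤ)` is divisible,
so its own character group is torsion-free.
-/

theorem isAlgCompact_of_compactSpace (K : Type*) [AddCommGroup K] [TopologicalSpace K]
    [IsTopologicalAddGroup K] [CompactSpace K] [T1Space K] : IsAlgCompact K := by
  intro E hE
  obtain ⟨x, hx⟩ : (⋂ i, {x : ℕ → K |
      ∑ j : Fin (E.len i), E.coeff i j • x (E.var i j) = E.const i}).Nonempty := by
    refine CompactSpace.iInter_nonempty (fun i => isClosed_singleton.preimage ?_) fun s => ?_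
    · fun_prop
    · obtain ⟨x, hx⟩ := hE s
      exact ⟨x, Set.mem_iInter₂.2 hx⟩
  exact ⟨x, Set.mem_iInter.1 hx⟩

theorem isAlgCompact_addMonoidHom_unitAddCircle (A : Type*) [AddCommGroup A] :
    IsAlgCompact (A →+ UnitAddCircle) := by
  let coe := AddMonoidHom.coeFn A UnitAddCircle
  let _ : TopologicalSpace (A →+ UnitAddCircle) := .induced coe inferInstance
  have hcoe : Topology.IsClosedEmbedding coe :=
    ⟨⟨⟨rfl⟩, DFunLike.coe_injective⟩, AddMonoidHom.isClosed_range_coe _ _⟩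
  have := topologicalAddGroup_induced coe
  have := hcoe.compactSpace
  have := hcoe.isEmbedding.t1Space
  exact isAlgCompact_of_compactSpace _

theorem zsmul_surjective_addMonoidHom_of_noZeroSMulDivisors {A Q : Type*} [AddCommGroup A]
    [NoZeroSMulDivisors ℤ A] [AddCommGroup Q] [DivisibleBy Q ℤ] {n : ℤ} (hn : n ≠ 0) :
    Function.Surjective fun χ : A →+ Q => n • χ := by
  intro χ
  obtain ⟨ψ, hψ⟩ := (Module.Baer.of_divisible Q).extension_property_addMonoidHom
    (DistribSMul.toAddMonoidHom A n) (smul_right_injective A hn) χ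
  refine ⟨ψ, AddMonoidHom.ext fun a => ?_⟩
  rw [← hψ]
  exact (map_zsmul ψ n a).symm

theorem noZeroSMulDivisors_addMonoidHom_of_zsmul_surjective {D B : Type*} [AddCommGroup D]
    [AddCommGroup B] (hD : ∀ n : ℤ, n ≠ 0 → Function.Surjective fun d : D => n • d) :
    NoZeroSMulDivisors ℤ (D →+ B) := by
  refine ⟨fun {n φ} h => or_iff_not_imp_left.2 fun hn => AddMonoidHom.ext fun d => ?_⟩
  obtain ⟨d, rfl⟩ := hD n hn d
  rw [map_zsmul, ← AddMonoidHom.zsmul_apply, h]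
  rfl

noncomputable def AddCircle.ratToReal : AddCircle (1 : ℚ) →+ UnitAddCircle :=
  QuotientAddGroup.map _ _ (Rat.castHom ℝ).toAddMonoidHom
    (AddSubgroup.zmultiples_le.2 (AddSubgroup.mem_comap.2 (by simp)))

theorem AddCircle.ratToReal_injective : Function.Injective AddCircle.ratToReal := by
  refine (injective_iff_map_eq_zero _).2 fun q hq => ?_
  induction q using QuotientAddGroup.induction_on with | H q =>
  obtain ⟨n, hn⟩ := (AddCircle.coe_eq_zero_iff 1).1 hq
  exact (AddCircle.coe_eq_zero_iff 1).2 ⟨n, by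
    rw [zsmul_one]; exact Rat.cast_injective (α := ℝ) (by simpa using hn)⟩

theorem exists_addMonoidHom_unitAddCircle_apply_ne_zero {A : Type*} [AddCommGroup A] {a : A}
    (ha : a ≠ 0) : ∃ χ : A →+ UnitAddCircle, χ a ≠ 0 := by
  obtain ⟨c, hc⟩ := CharacterModule.exists_character_apply_ne_zero_of_ne_zero ha
  exact ⟨AddCircle.ratToReal.comp c,
    fun h => hc (AddCircle.ratToReal_injective (h.trans (map_zero _).symm))⟩

theorem exists_addMonoidHom_unitAddCircle_nsmul_eq_zero_apply_ne_zero {A : Type*}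
    [AddCommGroup A] {n : ℕ} {a : A} (ha : ∀ b : A, n • b ≠ a) :
    ∃ χ : A →+ UnitAddCircle, n • χ = 0 ∧ χ a ≠ 0 := by
  let π := QuotientAddGroup.mk' (DistribSMul.toAddMonoidHom A n).range
  have hπn : ∀ b, π (n • b) = 0 := fun b => (QuotientAddGroup.eq_zero_iff _).2 ⟨b, rfl⟩
  have hπa : π a ≠ 0 := fun h => by
    obtain ⟨b, hb⟩ := (QuotientAddGroup.eq_zero_iff _).1 h
    exact ha b hb
  obtain ⟨χ, hχ⟩ := exists_addMonoidHom_unitAddCircle_apply_ne_zero hπa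
  refine ⟨χ.comp π, AddMonoidHom.ext fun b => ?_, hχ⟩
  show n • χ (π b) = 0
  rw [← map_nsmul, ← map_nsmul, hπn, map_zero]

theorem eval_unitAddCircle_injective (A : Type*) [AddCommGroup A] :
    Function.Injective (AddMonoidHom.eval : A →+ (A →+ UnitAddCircle) →+ UnitAddCircle) := by
  refine (injective_iff_map_eq_zero _).2 fun a ha => by_contra fun ha0 => ?_
  obtain ⟨χ, hχ⟩ := exists_addMonoidHom_unitAddCircle_apply_ne_zero ha0
  exact hχ (DFunLike.congr_fun ha χ)

theorem range_eval_unitAddCircle_isPure (A : Type*) [AddCommGroup A] :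
    (AddMonoidHom.eval : A →+ (A →+ UnitAddCircle) →+ UnitAddCircle).range.IsPure := by
  rintro n _ ⟨a, rfl⟩ ⟨v, hv⟩
  by_contra! h
  obtain ⟨χ, hnχ, hχ⟩ := exists_addMonoidHom_unitAddCircle_nsmul_eq_zero_apply_ne_zero
    fun b hb => h _ ⟨b, rfl⟩ (by rw [← map_nsmul, hb])
  apply hχ
  calc χ a = (n • v) χ := by rw [hv]; rfl
    _ = v (n • χ) := (map_nsmul v n χ).symm
    _ = 0 := by rw [hnχ, map_zero]

/-- Every torsion-free abelian group purely embeds into a torsion-free algebraically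
compact abelian group. -/
theorem exists_pure_embedding_into_algCompact
    (G : Type u) [AddCommGroup G] [NoZeroSMulDivisors ℤ G] :
    ∃ (H : Type u) (_ : AddCommGroup H), NoZeroSMulDivisors ℤ H ∧ IsAlgCompact H ∧
      ∃ f : G →+ H, Function.Injective f ∧ f.range.IsPure :=
  ⟨(G →+ UnitAddCircle) →+ UnitAddCircle, inferInstance,
    noZeroSMulDivisors_addMonoidHom_of_zsmul_surjective fun _ =>
      zsmul_surjective_addMonoidHom_of_noZeroSMulDivisors,
    isAlgCompact_addMonoidHom_unitAddCircle _, AddMonoidHom.eval,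
    eval_unitAddCircle_injective G, range_eval_unitAddCircle_isPure G⟩
end

section
/- Let G be a torsion-free abelian group, G₀ a pure subgroup of G, and E a countable system of ℤ-linear equations whose constants all lie in G₀. If E is finitely solvable in G, then there exists a torsion-free abelian group H of cardinality at most |G₀| + ℵ₀ together with a pure embedding of G₀ into H such that E has a solution in H. -/
universe u

/-!
Work in the reduced power `G^ℕ / (Fréchet filter)`. If `x_k` solves the first `k + 1`
equations, the germ of `k ↦ x_k` solves all of `E` exactly. The diagonal embedding of `G` is
pure: `n • [f] = a` forces `n • f k = a` for some `k`; composed with the purity of `G₀` in `G`,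
`G₀` is pure in the reduced power, hence in every intermediate subgroup. The subgroup generated
by `G₀` and the countably many `x_m` is an image of `G₀ × (ℕ →₀ ℤ)`, of size `≤ |G₀| + ℵ₀`.
-/

open Filter Cardinal Function

namespace AddSubgroup

variable {G K : Type*} [AddCommGroup G] [AddCommGroup K]

theorem IsPure.of_map_injective {f : G →+ K} (hf : Injective f) {A : AddSubgroup G}
    (h : (A.map f).IsPure) : A.IsPure := by
  rintro n a ha ⟨g, hg⟩
  obtain ⟨_, ⟨b, hb, rfl⟩, hnb⟩ := h n (f a) (mem_map_of_mem f ha) ⟨f g, by rw [← map_nsmul, hg]⟩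
  exact ⟨b, hb, hf (by rwa [map_nsmul])⟩

theorem IsPure.map_of_injective {A : AddSubgroup G} (hA : A.IsPure) {f : G →+ K}
    (hf : Injective f) (hf_pure : f.range.IsPure) : (A.map f).IsPure := by
  rintro n _ ⟨a, ha, rfl⟩ hdiv
  obtain ⟨_, ⟨g, rfl⟩, hg⟩ := hf_pure n (f a) ⟨a, rfl⟩ hdiv
  obtain ⟨b, hb, hba⟩ := hA n a ha ⟨g, hf (by rwa [map_nsmul])⟩
  exact ⟨f b, mem_map_of_mem f hb, by rw [← map_nsmul, hba]⟩

end AddSubgroup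

namespace Filter.Germ

variable {α : Type*} {l : Filter α}

instance {R M : Type*} [Zero R] [Zero M] [SMul R M] [NoZeroSMulDivisors R M] :
    NoZeroSMulDivisors R (Germ l M) where
  eq_zero_or_eq_zero_of_smul_eq_zero {c} f h := by
    induction f using Germ.inductionOn with
    | h f =>
      refine or_iff_not_imp_left.mpr fun hc => coe_eq.mpr ?_
      filter_upwards [(coe_eq (f := c • f) (g := 0)).mp h] with i hi
      exact (eq_zero_or_eq_zero_of_smul_eq_zero hi).resolve_left hc

def constAddHom (l : Filter α) (M : Type*) [AddMonoid M] : M →+ Germ l M where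
  toFun := (↑)
  map_zero' := rfl
  map_add' _ _ := rfl

variable {M : Type*} [AddCommGroup M]

theorem constAddHom_injective [NeBot l] : Injective (constAddHom l M) :=
  fun _ _ => const_inj.mp

theorem isPure_range_constAddHom [NeBot l] : (constAddHom l M).range.IsPure := by
  rintro n _ ⟨a, rfl⟩ ⟨k, hk⟩
  induction k using Germ.inductionOn with
  | h f =>
    have hev : ∀ᶠ i in l, n • f i = a := coe_eq.mp hk
    obtain ⟨i, hi⟩ := hev.exists
    exact ⟨constAddHom l M (f i), ⟨f i, rfl⟩, by rw [← map_nsmul, hi]⟩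

end Filter.Germ

theorem Cardinal.mul_aleph0_le_add_aleph0 (a : Cardinal) : a * ℵ₀ ≤ a + ℵ₀ :=
  (mul_le_max_of_aleph0_le_right le_rfl).trans (max_le le_self_add le_add_self)

theorem LinearSystem.FinitelySolvable.exists_solution_germ_atTop {G : Type*} [AddCommGroup G]
    {E : LinearSystem G} (hE : E.FinitelySolvable) :
    ∃ x : ℕ → Germ (atTop : Filter ℕ) G, ∀ i, ∑ j, E.coeff i j • x (E.var i j) = ↑(E.const i) := by
  choose sol hsol using hE
  -- the `k`-th coordinate solves the first `k + 1` equations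
  let X : ℕ → ℕ → G := fun m k => sol (Finset.range (k + 1)) m
  refine ⟨fun m => (X m : Germ (atTop : Filter ℕ) G), fun i => ?_⟩
  have hcoe : ∑ j, E.coeff i j • (X (E.var i j) : Germ (atTop : Filter ℕ) G) =
      ↑(∑ j, E.coeff i j • X (E.var i j)) := by
    simp only [← Germ.coe_smul]
    exact (map_sum (Germ.coeAddHom (M := G) atTop) _ _).symm
  rw [hcoe]
  refine Germ.coe_eq.mpr ?_
  filter_upwards [eventually_ge_atTop i] with k hk
  simpa [X, Finset.sum_apply] using hsol _ i (Finset.mem_range.mpr (Nat.lt_succ_of_le hk))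

/-- If `G₀` is a pure subgroup of a torsion-free abelian group `G` and `E` is a countable
system of `ℤ`-linear equations with constants in `G₀` which is finitely solvable in `G`,
then there is a torsion-free group `H` of cardinality at most `|G₀| + ℵ₀` together with a
pure embedding of `G₀` into `H` in which `E` is solvable. -/
theorem exists_small_pure_extension_with_solution
    {G : Type u} [AddCommGroup G] [NoZeroSMulDivisors ℤ G]
    (G₀ : AddSubgroup G) (hG₀ : G₀.IsPure)
    (E : LinearSystem G) (hconst : ∀ i : ℕ, E.const i ∈ G₀)
    (hfs : E.FinitelySolvable) :
    ∃ (H : Type u) (_ : AddCommGroup H), NoZeroSMulDivisors ℤ H ∧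
      Cardinal.mk H ≤ Cardinal.mk ↥G₀ + Cardinal.aleph0 ∧
      ∃ f : ↥G₀ →+ H, Function.Injective f ∧ f.range.IsPure ∧
        ∃ x : ℕ → H,
          ∀ i : ℕ, ∑ j : Fin (E.len i), E.coeff i j • x (E.var i j) = f ⟨E.const i, hconst i⟩ := by
  obtain ⟨x, hx⟩ := hfs.exists_solution_germ_atTop
  let e := (Germ.constAddHom (atTop : Filter ℕ) G).comp G₀.subtype
  -- the subgroup generated by `G₀` and the `x m`
  let φ := e.coprod (Finsupp.linearCombination ℤ x).toAddMonoidHom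
  have he : ∀ a, e a ∈ φ.range := fun a => ⟨(a, 0), by simp [φ]⟩
  have hxH : ∀ m, x m ∈ φ.range := fun m => ⟨(0, Finsupp.single m 1), by simp [φ]⟩
  refine ⟨φ.range, inferInstance, Subtype.val_injective.noZeroSMulDivisors _ rfl fun _ _ => rfl,
    ?_, e.codRestrict _ he, ?_, ?_, fun m => ⟨x m, hxH m⟩, fun i => Subtype.ext ?_⟩
  · calc #φ.range ≤ #(G₀ × (ℕ →₀ ℤ)) := mk_le_of_surjective φ.rangeRestrict_surjective
      _ = #G₀ * ℵ₀ := by simp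
      _ ≤ #G₀ + ℵ₀ := mul_aleph0_le_add_aleph0 _
  · exact fun a b hab => Subtype.ext (Germ.constAddHom_injective (congrArg Subtype.val hab))
  · refine AddSubgroup.IsPure.of_map_injective φ.range.subtype_injective ?_
    have hcomp : φ.range.subtype.comp (e.codRestrict _ he) = e := rfl
    rw [← AddMonoidHom.range_comp, hcomp, AddMonoidHom.range_comp, AddSubgroup.range_subtype]
    exact hG₀.map_of_injective Germ.constAddHom_injective Germ.isPure_range_constAddHom
  · simp only [AddSubgroup.val_finsetSum, AddSubgroupClass.coe_zsmul,
      AddMonoidHom.codRestrict_apply]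
    exact hx i
end

section
/- Let G be an abelian group and (G_i)_{i∈δ} an increasing chain (indexed by a linear order δ) of subgroups with G = ⋃_{i∈δ} G_i, such that G_i is a pure subgroup of G_j whenever i ≤ j, and each G_i is a torsion-free finitely Butler group. Then G is a torsion-free finitely Butler group, and each G_i is a pure subgroup of G. -/
/-- `H` is a pure subgroup of `K` (both regarded as subgroups of an ambient group):
`H ≤ K` and `nK ∩ H = nH` for every `n : ℕ`. -/
def IsPureIn {G : Type*} [AddCommGroup G] (H K : AddSubgroup G) : Prop :=
  H ≤ K ∧ ∀ (n : ℕ), ∀ h ∈ H, (∃ g ∈ K, n • g = h) → ∃ h' ∈ H, n • h' = h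

/-- A Butler group: a torsion-free abelian group of finite rank admitting a pure embedding
into a finite direct sum of rank-one torsion-free groups (nonzero subgroups of `ℚ`). -/
def IsButler (B : Type*) [AddCommGroup B] : Prop :=
  NoZeroSMulDivisors ℤ B ∧ Module.rank ℤ B < Cardinal.aleph0 ∧
    ∃ (k : ℕ) (A : Fin k → AddSubgroup ℚ), (∀ i, A i ≠ ⊥) ∧
      ∃ f : B →+ (∀ i : Fin k, ↥(A i)), Function.Injective f ∧ f.range.IsPure

/-- A torsion-free finitely Butler (B₀-) group: a torsion-free abelian group all of whose
finite-rank pure subgroups are Butler groups. -/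
def IsFinitelyButler (B : Type*) [AddCommGroup B] : Prop :=
  NoZeroSMulDivisors ℤ B ∧
    ∀ H : AddSubgroup B, H.IsPure → Module.rank ℤ ↥H < Cardinal.aleph0 → IsButler ↥H

/-!
By rank–nullity, every element of a finite-rank torsion-free group `H` has a nonzero multiple in
the span of a finite independent set of size `rank H`. If `H` lies in the union of the chain, that
finite set lies in a single member `Gᵢ`, and since `Gᵢ` is pure in the (torsion-free) union, all
of `H` lies in `Gᵢ`. A pure subgroup of the union contained in `Gᵢ` is pure in `Gᵢ`, hence Butler.
-/

open Cardinal Submodule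

section RankNullity

variable {R M : Type*} [CommRing R] [IsDomain R] [AddCommGroup M] [Module R M]

theorem Submodule.exists_smul_mem_of_rank_eq {N : Submodule R M}
    (hfin : Module.rank R M < ℵ₀) (h : Module.rank R N = Module.rank R M) (x : M) :
    ∃ a : R, a ≠ 0 ∧ a • x ∈ N := by
  have hquot : Module.rank R (M ⧸ N) = 0 := by
    have := N.rank_quotient_add_rank
    rw [h, add_eq_right_iff] at this
    exact this.resolve_left fun h' => (le_max_left _ _).trans h' |>.not_gt hfin
  obtain ⟨a, ha, hax⟩ := rank_eq_zero_iff.mp hquot (N.mkQ x)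
  exact ⟨a, ha, (Submodule.Quotient.mk_eq_zero N).mp (by rwa [← N.mkQ_apply, map_smul])⟩

theorem Module.exists_finite_forall_smul_mem_span (hfin : Module.rank R M < ℵ₀) :
    ∃ s : Set M, s.Finite ∧ ∀ x : M, ∃ a : R, a ≠ 0 ∧ a • x ∈ span R s := by
  obtain ⟨s, hcard, hs⟩ := exists_set_linearIndependent R M
  refine ⟨s, Cardinal.lt_aleph0_iff_set_finite.mp (hcard ▸ hfin), ?_⟩
  exact (span R s).exists_smul_mem_of_rank_eq hfin ((rank_span_set hs).trans hcard)

end RankNullity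

namespace AddSubgroup

variable {G : Type*} [AddCommGroup G]

theorem IsPure.mem_of_nsmul_mem [NoZeroSMulDivisors ℤ G] {H : AddSubgroup G} (hH : H.IsPure)
    {n : ℕ} (hn : n ≠ 0) {g : G} (hg : n • g ∈ H) : g ∈ H := by
  obtain ⟨h, hh, hng⟩ := hH n _ hg ⟨g, rfl⟩
  have : h = g := by
    apply smul_right_injective G (Int.natCast_ne_zero.mpr hn)
    simpa only [natCast_zsmul] using hng
  exact this ▸ hh

theorem IsPure.mem_of_zsmul_mem [NoZeroSMulDivisors ℤ G] {H : AddSubgroup G} (hH : H.IsPure)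
    {a : ℤ} (ha : a ≠ 0) {g : G} (hg : a • g ∈ H) : g ∈ H := by
  refine hH.mem_of_nsmul_mem (Int.natAbs_ne_zero.mpr ha) ?_
  rcases Int.natAbs_eq a with h | h
  · rwa [h, natCast_zsmul] at hg
  · rwa [h, neg_smul, neg_mem_iff, natCast_zsmul] at hg

theorem IsPure.addSubgroupOf {H K : AddSubgroup G} (hH : H.IsPure) (hle : H ≤ K) :
    (H.addSubgroupOf K).IsPure := by
  rintro n h hh ⟨g, rfl⟩
  obtain ⟨h', hh', hnh'⟩ := hH n _ hh ⟨g, rfl⟩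
  exact ⟨⟨h', hle hh'⟩, hh', Subtype.ext hnh'⟩

theorem isPure_of_isPureIn {ι : Type*} [Preorder ι] [IsDirectedOrder ι] {K : ι → AddSubgroup G}
    (hK : ∀ i j, i ≤ j → IsPureIn (K i) (K j)) (hcover : ∀ g, ∃ i, g ∈ K i) (i : ι) :
    (K i).IsPure := by
  rintro n h hh ⟨g, rfl⟩
  obtain ⟨j, hj⟩ := hcover g
  obtain ⟨k, hik, hjk⟩ := directed_of (· ≤ ·) i j
  exact (hK i k hik).2 n _ hh ⟨g, (hK j k hjk).1 hj, rfl⟩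

theorem noZeroSMulDivisors_of_forall_mem {ι : Type*} {K : ι → AddSubgroup G}
    (hcover : ∀ g, ∃ i, g ∈ K i) (hK : ∀ i, NoZeroSMulDivisors ℤ (K i)) :
    NoZeroSMulDivisors ℤ G where
  eq_zero_or_eq_zero_of_smul_eq_zero {a g} hag := by
    obtain ⟨i, hi⟩ := hcover g
    have : a • (⟨g, hi⟩ : K i) = 0 := Subtype.ext hag
    simpa [Subtype.ext_iff] using this

theorem exists_le_of_rank_lt_aleph0 [NoZeroSMulDivisors ℤ G] {ι : Type*} [Preorder ι]
    [IsDirectedOrder ι] {K : ι → AddSubgroup G} (hK : Monotone K) (hpure : ∀ i, (K i).IsPure)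
    (hcover : ∀ g, ∃ i, g ∈ K i) {H : AddSubgroup G} (hH : Module.rank ℤ H < ℵ₀) :
    ∃ i, H ≤ K i := by
  obtain ⟨s, hs, hspan⟩ := Module.exists_finite_forall_smul_mem_span hH
  choose idx hidx using hcover
  have : Nonempty ι := ⟨idx 0⟩
  have : Finite s := hs.to_subtype
  obtain ⟨i, hi⟩ := Finite.exists_le fun t : s => idx t
  have hspan_le : span ℤ s ≤ (K i).toIntSubmodule.comap H.subtype.toIntLinearMap :=
    span_le.mpr fun t ht => hK (hi ⟨t, ht⟩) (hidx t)
  refine ⟨i, fun x hx => ?_⟩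
  obtain ⟨a, ha, hax⟩ := hspan ⟨x, hx⟩
  exact (hpure i).mem_of_zsmul_mem ha (hspan_le hax)

end AddSubgroup

universe u in
theorem IsButler.of_addEquiv {B C : Type u} [AddCommGroup B] [AddCommGroup C] (h : IsButler B)
    (e : B ≃+ C) : IsButler C := by
  obtain ⟨htf, hrank, k, A, hA, f, hf, hpure⟩ := h
  refine ⟨e.symm.injective.noZeroSMulDivisors _ (map_zero _) (map_zsmul e.symm),
    e.symm.toIntLinearEquiv.rank_eq ▸ hrank, k, A, hA, f.comp e.symm, hf.comp e.symm.injective, ?_⟩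
  rwa [AddMonoidHom.range_comp, AddMonoidHom.range_eq_top_of_surjective _ e.symm.surjective,
    ← AddMonoidHom.range_eq_map]

/-- The union of an increasing chain of torsion-free finitely Butler groups, each pure in
the later ones, is a torsion-free finitely Butler group, and each member of the chain is
pure in the union. -/
theorem isFinitelyButler_of_union_of_chain
    {G : Type*} [AddCommGroup G] {δ : Type*} [LinearOrder δ]
    (Gc : δ → AddSubgroup G)
    (hchain : ∀ i j, i ≤ j → IsPureIn (Gc i) (Gc j))
    (hunion : ∀ g : G, ∃ i, g ∈ Gc i)
    (hB : ∀ i, IsFinitelyButler ↥(Gc i)) :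
    IsFinitelyButler G ∧ ∀ i, (Gc i).IsPure := by
  have hpure : ∀ i, (Gc i).IsPure := AddSubgroup.isPure_of_isPureIn hchain hunion
  have : NoZeroSMulDivisors ℤ G :=
    AddSubgroup.noZeroSMulDivisors_of_forall_mem hunion fun i => (hB i).1
  refine ⟨⟨this, fun H hH hrank => ?_⟩, hpure⟩
  obtain ⟨i, hle⟩ := AddSubgroup.exists_le_of_rank_lt_aleph0
    (fun i j hij => (hchain i j hij).1) hpure hunion hrank
  let e := AddSubgroup.addSubgroupOfEquivOfLe hle
  exact ((hB i).2 _ (hH.addSubgroupOf hle) (e.toIntLinearEquiv.rank_eq ▸ hrank)).of_addEquiv e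
end

section
/- Let E be a torsion-free abelian group, D a divisible subgroup of E, and e_0,…,e_{n−1} ∈ E elements such that for every x ∈ E there exist an integer m ≥ 1, integers k_0,…,k_{n−1}, and d ∈ D with m·x = k_0·e_0 + ⋯ + k_{n−1}·e_{n−1} + d. Then E = D + P, where P is the pure closure of {e_0,…,e_{n−1}} in E; that is, every x ∈ E can be written as x = d + h with d ∈ D and h ∈ P. -/
/-- The pure closure of a subset `A`: the smallest pure subgroup containing `A`
(the intersection of all pure subgroups containing `A`). -/
def pureClosure {G : Type*} [AddCommGroup G] (A : Set G) : AddSubgroup G :=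
  sInf {H : AddSubgroup G | H.IsPure ∧ A ⊆ ↑H}

/-- If `E` is torsion-free, `D ≤ E` is divisible, and `e₀, …, e_{n-1} ∈ E` are such that
every `x ∈ E` satisfies `m • x = ∑ kᵢ • eᵢ + d` for some integer `m ≥ 1`, integers `kᵢ`
and `d ∈ D`, then `E = D + P` where `P` is the pure closure of `{e₀, …, e_{n-1}}`. -/
theorem eq_divisible_add_pureClosure
    {E : Type*} [AddCommGroup E] [NoZeroSMulDivisors ℤ E]
    (D : AddSubgroup E) (hD : ∀ d ∈ D, ∀ n : ℕ, 1 ≤ n → ∃ x ∈ D, n • x = d)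
    {n : ℕ} (e : Fin n → E)
    (hgen : ∀ x : E, ∃ m : ℤ, 1 ≤ m ∧ ∃ k : Fin n → ℤ, ∃ d ∈ D,
      m • x = (∑ i : Fin n, k i • e i) + d) :
    ∀ x : E, ∃ d ∈ D, ∃ h ∈ pureClosure (Set.range e), x = d + h := by
  intro x
  obtain ⟨m, hm, k, d, hd, hmx⟩ := hgen x
  obtain ⟨d', hd', hmd'⟩ := hD d hd m.toNat (by omega)
  have hcast : ((m.toNat : ℤ)) = m := Int.toNat_of_nonneg (by omega)
  have hmd : m • d' = d := by
    rw [← hcast, natCast_zsmul, hmd']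
  refine ⟨d', hd', x - d', ?_, by abel⟩
  have key : m • (x - d') = ∑ i : Fin n, k i • e i := by
    rw [smul_sub, hmx, hmd]; abel
  rw [pureClosure, AddSubgroup.mem_sInf]
  rintro H ⟨hpure, hsub⟩
  have hs : (∑ i : Fin n, k i • e i) ∈ H :=
    AddSubgroup.sum_mem _ (fun i _ => AddSubgroup.zsmul_mem _ (hsub ⟨i, rfl⟩) _)
  have hmem : m.toNat • (x - d') ∈ H := by
    rw [← natCast_zsmul, hcast, key]; exact hs
  obtain ⟨h', hh', hmh'⟩ := hpure m.toNat _ hmem ⟨x - d', rfl⟩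
  have heq : m • h' = m • (x - d') := by
    rw [← hcast, natCast_zsmul, natCast_zsmul, hmh']
  have := smul_right_injective E (show m ≠ 0 by omega) heq
  rwa [← this]
end

section
/- Let H be an abelian group, G a subgroup of H, and a, b ∈ H. Then the following are equivalent: (1) there exists a group isomorphism f from the subgroup of H generated by G ∪ {a} onto the subgroup of H generated by G ∪ {b} such that f(x) = x for all x ∈ G and f(a) = b; (2) either (n·a ∉ G and n·b ∉ G for every integer n ≥ 1), or there exist an integer n ≥ 1 and g* ∈ G such that n·a = g* = n·b and m·a ∉ G and m·b ∉ G for every integer m with 1 ≤ m < n. -/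
private lemma mem_cl_union {H : Type*} [AddCommGroup H] (G : AddSubgroup H) (a x : H) :
    x ∈ AddSubgroup.closure ((G:Set H) ∪ {a}) ↔ ∃ g ∈ G, ∃ k : ℤ, g + k • a = x := by
  rw [AddSubgroup.closure_union, AddSubgroup.closure_eq, AddSubgroup.mem_sup]
  simp [AddSubgroup.mem_closure_singleton]

/-- From the RHS, every multiple of `a` lying in `G` agrees with the same multiple of `b`. -/
private lemma key_of_rhs {H : Type*} [AddCommGroup H] {G : AddSubgroup H} {a b : H}
    (h : (∀ n : ℤ, 1 ≤ n → n • a ∉ G ∧ n • b ∉ G) ∨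
      ∃ n : ℤ, 1 ≤ n ∧ ∃ g ∈ G, n • a = g ∧ n • b = g ∧
        ∀ m : ℤ, 1 ≤ m → m < n → m • a ∉ G ∧ m • b ∉ G) :
    ∀ m : ℤ, m • a ∈ G → m • a = m • b := by
  intro m hm
  rcases h with h | ⟨n, hn1, g, hg, hna, hnb, hmin⟩
  · rcases lt_trichotomy m 0 with hlt | rfl | hgt
    · exact absurd (by rw [neg_smul]; exact neg_mem hm) (h (-m) (by omega)).1
    · simp
    · exact absurd hm (h m (by omega)).1
  · have hn0 : 0 < n := by omega
    set q := m / n with hq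
    set r := m % n with hr
    have hmr : n * q + r = m := Int.mul_ediv_add_emod m n
    have hr0 : 0 ≤ r := Int.emod_nonneg m (by omega)
    have hrn : r < n := Int.emod_lt_of_pos m hn0
    have hra : r • a ∈ G := by
      have : r • a = m • a - q • (n • a) := by
        rw [smul_smul, ← sub_smul]
        congr 1
        linear_combination hmr
      rw [this]
      exact sub_mem hm (by rw [hna]; exact zsmul_mem hg q)
    have hr00 : r = 0 := by
      by_contra hne
      exact (hmin r (by omega) hrn).1 hra
    have hmq : m = q * n := by rw [hr00] at hmr; linear_combination hmr.symm
    calc m • a = q • (n • a) := by rw [smul_smul, ← hmq]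
    _ = q • (n • b) := by rw [hna, hnb]
    _ = m • b := by rw [smul_smul, ← hmq]

private lemma rhs_symm {H : Type*} [AddCommGroup H] {G : AddSubgroup H} {a b : H}
    (h : (∀ n : ℤ, 1 ≤ n → n • a ∉ G ∧ n • b ∉ G) ∨
      ∃ n : ℤ, 1 ≤ n ∧ ∃ g ∈ G, n • a = g ∧ n • b = g ∧
        ∀ m : ℤ, 1 ≤ m → m < n → m • a ∉ G ∧ m • b ∉ G) :
    (∀ n : ℤ, 1 ≤ n → n • b ∉ G ∧ n • a ∉ G) ∨
      ∃ n : ℤ, 1 ≤ n ∧ ∃ g ∈ G, n • b = g ∧ n • a = g ∧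
        ∀ m : ℤ, 1 ≤ m → m < n → m • b ∉ G ∧ m • a ∉ G := by
  rcases h with h | ⟨n, hn1, g, hg, hna, hnb, hmin⟩
  · exact Or.inl fun n hn => ⟨(h n hn).2, (h n hn).1⟩
  · exact Or.inr ⟨n, hn1, g, hg, hnb, hna,
      fun m h1 h2 => ⟨(hmin m h1 h2).2, (hmin m h1 h2).1⟩⟩

/-- Well-definedness: if two `G`-`a` representations agree, so do the corresponding
`G`-`b` combinations. -/
private lemma welldef {H : Type*} [AddCommGroup H] {G : AddSubgroup H} {a b : H}
    (key : ∀ m : ℤ, m • a ∈ G → m • a = m • b) :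
    ∀ g ∈ G, ∀ g' ∈ G, ∀ k k' : ℤ, g + k • a = g' + k' • a → g + k • b = g' + k' • b := by
  intro g hg g' hg' k k' heq
  have h1 : (k - k') • a = g' - g := by
    rw [sub_smul]
    linear_combination (norm := module) heq
  have h2 : (k - k') • a ∈ G := h1 ▸ sub_mem hg' hg
  have h3 : (k - k') • b = g' - g := by rw [← key _ h2]; exact h1
  rw [sub_smul] at h3
  linear_combination (norm := module) h3

/-- Characterization of when there is an isomorphism over `G` between `⟨G ∪ {a}⟩` and
`⟨G ∪ {b}⟩` fixing `G` pointwise and sending `a` to `b`: either no positive multiple of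
`a` nor of `b` lies in `G`, or some least positive multiple of both lands on a common
element `g* ∈ G`. -/
theorem iso_over_subgroup_iff
    {H : Type*} [AddCommGroup H] (G : AddSubgroup H) (a b : H) :
    (∃ f : ↥(AddSubgroup.closure ((G : Set H) ∪ {a})) ≃+
           ↥(AddSubgroup.closure ((G : Set H) ∪ {b})),
      (∀ x : ↥(AddSubgroup.closure ((G : Set H) ∪ {a})), (x : H) ∈ G → ((f x : H) = (x : H))) ∧
      (∀ x : ↥(AddSubgroup.closure ((G : Set H) ∪ {a})), (x : H) = a → (f x : H) = b))
    ↔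
    ((∀ n : ℤ, 1 ≤ n → n • a ∉ G ∧ n • b ∉ G) ∨
      ∃ n : ℤ, 1 ≤ n ∧ ∃ g ∈ G, n • a = g ∧ n • b = g ∧
        ∀ m : ℤ, 1 ≤ m → m < n → m • a ∉ G ∧ m • b ∉ G) := by
  set clA := AddSubgroup.closure ((G : Set H) ∪ {a}) with hclA
  set clB := AddSubgroup.closure ((G : Set H) ∪ {b}) with hclB
  have haA : a ∈ clA := AddSubgroup.subset_closure (Or.inr rfl)
  have hbB : b ∈ clB := AddSubgroup.subset_closure (Or.inr rfl)
  have hGA : ∀ x ∈ G, x ∈ clA := fun x hx => AddSubgroup.subset_closure (Or.inl hx)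
  have hGB : ∀ x ∈ G, x ∈ clB := fun x hx => AddSubgroup.subset_closure (Or.inl hx)
  constructor
  · rintro ⟨f, hfix, hfa⟩
    -- K1 : m • a ∈ G → m • b = m • a
    set A : clA := ⟨a, haA⟩ with hA
    have hfA : (f A : H) = b := hfa A rfl
    have hsm : ∀ m : ℤ, (f (m • A) : H) = m • b := by
      intro m
      rw [map_zsmul]
      push_cast [hfA]
      rfl
    have K1 : ∀ m : ℤ, m • a ∈ G → m • b = m • a := by
      intro m hm
      have h1 : (f (m • A) : H) = ((m • A : clA) : H) := hfix _ hm
      rw [hsm] at h1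
      exact h1
    have K2 : ∀ m : ℤ, m • b ∈ G → m • a ∈ G ∧ m • b = m • a := by
      intro m hm
      have hmem : m • b ∈ clA := hGA _ hm
      set x : clA := ⟨m • b, hmem⟩ with hx
      have h1 : (f x : H) = m • b := hfix x hm
      have h2 : (f (m • A) : H) = m • b := hsm m
      have h3 : x = m • A := f.injective (Subtype.ext (h1.trans h2.symm))
      have h4 : m • b = m • a := congrArg Subtype.val h3
      exact ⟨h4 ▸ hm, h4⟩
    by_cases hex : ∃ n : ℤ, 1 ≤ n ∧ n • a ∈ G
    · right
      obtain ⟨n, hn1, hnG⟩ := hex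
      -- minimize using Nat.find
      have hp : ∃ k : ℕ, ((k : ℤ) + 1) • a ∈ G := by
        refine ⟨(n - 1).toNat, ?_⟩
        have : ((n - 1).toNat : ℤ) + 1 = n := by omega
        rw [this]; exact hnG
      classical
      set N := Nat.find hp with hN
      set n0 : ℤ := (N : ℤ) + 1 with hn0
      have hn0G : n0 • a ∈ G := Nat.find_spec hp
      have hn01 : (1 : ℤ) ≤ n0 := by omega
      refine ⟨n0, hn01, n0 • a, hn0G, rfl, K1 n0 hn0G, ?_⟩
      intro m h1 h2
      have hma : m • a ∉ G := by
        intro hmG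
        have hk : ((m - 1).toNat : ℤ) + 1 = m := by omega
        have := Nat.find_min hp (m := (m - 1).toNat) (by omega)
        rw [hk] at this
        exact this hmG
      exact ⟨hma, fun hmb => hma (K2 m hmb).1⟩
    · left
      push_neg at hex
      intro n hn
      refine ⟨hex n hn, fun hnb => hex n hn (K2 n hnb).1⟩
  · intro h
    have keyA : ∀ m : ℤ, m • a ∈ G → m • a = m • b := key_of_rhs h
    have keyB : ∀ m : ℤ, m • b ∈ G → m • b = m • a := key_of_rhs (rhs_symm h)
    classical
    have repA : ∀ x : clA, ∃ g ∈ G, ∃ k : ℤ, g + k • a = (x : H) :=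
      fun x => (mem_cl_union G a x).mp x.2
    have repB : ∀ y : clB, ∃ g ∈ G, ∃ k : ℤ, g + k • b = (y : H) :=
      fun y => (mem_cl_union G b y).mp y.2
    choose gA hgA kA hkA using repA
    choose gB hgB kB hkB using repB
    set F : clA → clB := fun x =>
      ⟨gA x + kA x • b, (mem_cl_union G b _).mpr ⟨gA x, hgA x, kA x, rfl⟩⟩ with hF
    set Fi : clB → clA := fun y =>
      ⟨gB y + kB y • a, (mem_cl_union G a _).mpr ⟨gB y, hgB y, kB y, rfl⟩⟩ with hFi
    -- uniqueness lemmas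
    have UA : ∀ (x : clA) (g : H), g ∈ G → ∀ k : ℤ, g + k • a = (x : H) →
        (F x : H) = g + k • b := by
      intro x g hg k hk
      exact welldef keyA (gA x) (hgA x) g hg (kA x) k ((hkA x).trans hk.symm)
    have UB : ∀ (y : clB) (g : H), g ∈ G → ∀ k : ℤ, g + k • b = (y : H) →
        (Fi y : H) = g + k • a := by
      intro y g hg k hk
      exact welldef keyB (gB y) (hgB y) g hg (kB y) k ((hkB y).trans hk.symm)
    have hleft : ∀ x : clA, Fi (F x) = x := by
      intro x
      apply Subtype.ext
      have h1 : (Fi (F x) : H) = gA x + kA x • a := UB (F x) (gA x) (hgA x) (kA x) rfl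
      rw [h1, hkA x]
    have hright : ∀ y : clB, F (Fi y) = y := by
      intro y
      apply Subtype.ext
      have h1 : (F (Fi y) : H) = gB y + kB y • b := UA (Fi y) (gB y) (hgB y) (kB y) rfl
      rw [h1, hkB y]
    have hadd : ∀ x y : clA, F (x + y) = F x + F y := by
      intro x y
      apply Subtype.ext
      have hxy : (gA x + gA y) + (kA x + kA y) • a = ((x + y : clA) : H) := by
        push_cast
        rw [← hkA x, ← hkA y, add_smul]
        abel
      have h1 : (F (x + y) : H) = (gA x + gA y) + (kA x + kA y) • b :=
        UA (x + y) (gA x + gA y) (add_mem (hgA x) (hgA y)) (kA x + kA y) hxy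
      rw [h1]
      show _ = (F x : H) + (F y : H)
      rw [hF]
      simp only [add_smul]
      abel
    refine ⟨⟨⟨F, Fi, hleft, hright⟩, hadd⟩, ?_, ?_⟩
    · intro x hx
      show (F x : H) = (x : H)
      simpa using UA x (x : H) hx 0 (by simp)
    · intro x hx
      show (F x : H) = b
      simpa using UA x 0 (zero_mem G) 1 (by simp [hx])
end

section
/- Let G be an infinite abelian group, I an index set with |I| > |G|, and for each i ∈ I let H_i be an abelian group containing G as a subgroup and a_i ∈ H_i. Then there exist i ≠ j in I and a group isomorphism f from the subgroup of H_i generated by G ∪ {a_i} onto the subgroup of H_j generated by G ∪ {a_j} such that f(x) = x for all x ∈ G and f(a_i) = a_j. -/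
universe u

open AddSubgroup Function

section Aux

variable {G : Type u} {H1 H2 : Type u} [AddCommGroup G] [AddCommGroup H1] [AddCommGroup H2]

/-- The canonical map `G × ℤ → H` sending `(g, k)` to `ι g + k • a`. -/
def auxPhi (ι : G →+ H1) (a : H1) : G × ℤ →+ H1 :=
  ι.coprod ((zmultiplesHom H1) a)

lemma auxPhi_apply (ι : G →+ H1) (a : H1) (p : G × ℤ) :
    auxPhi ι a p = ι p.1 + p.2 • a := rfl

lemma auxPhi_range (ι : G →+ H1) (a : H1) :
    (auxPhi ι a).range = closure (Set.range ι ∪ {a}) := by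
  apply le_antisymm
  · rintro x ⟨p, rfl⟩
    rw [auxPhi_apply]
    refine add_mem ?_ (zsmul_mem ?_ p.2)
    · exact AddSubgroup.subset_closure (Set.mem_union_left _ ⟨p.1, rfl⟩)
    · exact AddSubgroup.subset_closure (Set.mem_union_right _ rfl)
  · rw [closure_le]
    rintro x (⟨g, rfl⟩ | rfl)
    · exact ⟨(g, 0), by simp [auxPhi_apply]⟩
    · exact ⟨(0, 1), by simp [auxPhi_apply]⟩

/-- The invariant of `(ι, a)`: the least positive `m` with `m • a ∈ range ι`
together with its preimage, if it exists. -/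
noncomputable def auxInv (ι : G →+ H1) (a : H1) : Option (ℕ × G) := by
  classical
  exact if h : ∃ n : ℕ, 0 < n ∧ ∃ g, ι g = (n : ℤ) • a
    then some (Nat.find h, Classical.choose (Nat.find_spec h).2)
    else none

lemma auxKer_of_none (ι : G →+ H1) (a : H1) (hι : Injective ι)
    (h : auxInv ι a = none) : (auxPhi ι a).ker = ⊥ := by
  classical
  unfold auxInv at h
  split_ifs at h with hcond
  rw [eq_bot_iff]
  rintro ⟨g, k⟩ hk
  rw [AddMonoidHom.mem_ker, auxPhi_apply] at hk
  have hk0 : k = 0 := by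
    by_contra hk0
    rcases lt_or_gt_of_ne hk0 with hneg | hpos
    · apply hcond
      refine ⟨(-k).toNat, by omega, g, ?_⟩
      rw [Int.toNat_of_nonneg (by omega), neg_smul]
      exact eq_neg_of_add_eq_zero_left hk
    · apply hcond
      refine ⟨k.toNat, by omega, -g, ?_⟩
      rw [Int.toNat_of_nonneg (by omega), map_neg]
      exact (eq_neg_of_add_eq_zero_right hk).symm
  subst hk0
  simp only [zero_smul, add_zero] at hk
  have : g = 0 := hι (by simpa using hk)
  simp [this, AddSubgroup.mem_bot, Prod.ext_iff]

lemma auxKer_of_some (ι : G →+ H1) (a : H1) (hι : Injective ι) {m : ℕ} {g : G}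
    (h : auxInv ι a = some (m, g)) :
    (auxPhi ι a).ker = zmultiples ((-g, (m : ℤ)) : G × ℤ) := by
  classical
  unfold auxInv at h
  split_ifs at h with hcond
  · obtain ⟨hm, hg⟩ : Nat.find hcond = m ∧ Classical.choose (Nat.find_spec hcond).2 = g := by
      simpa [Prod.ext_iff] using h
    have hmpos : 0 < m := hm ▸ (Nat.find_spec hcond).1
    have hgval : ι g = (m : ℤ) • a := by
      rw [← hg, ← hm]; exact Classical.choose_spec (Nat.find_spec hcond).2
    have hmin : ∀ n : ℕ, n < m → ¬(0 < n ∧ ∃ g', ι g' = (n : ℤ) • a) := by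
      intro n hn; rw [← hm] at hn; exact Nat.find_min hcond hn
    ext ⟨g', k⟩
    rw [AddMonoidHom.mem_ker, auxPhi_apply, AddSubgroup.mem_zmultiples_iff]
    constructor
    · intro hk
      simp only at hk
      set q : ℤ := k / (m : ℤ) with hq
      set r : ℤ := k % (m : ℤ) with hr
      have hrange : 0 ≤ r ∧ r < (m : ℤ) := by
        constructor
        · exact Int.emod_nonneg k (by exact_mod_cast hmpos.ne')
        · exact Int.emod_lt_of_pos k (by exact_mod_cast hmpos)
      have hkqr : k = q * (m : ℤ) + r := by
        rw [hq, hr, mul_comm]; exact (Int.mul_ediv_add_emod k (m : ℤ)).symm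
      have hra : ι (-(g' + q • g)) = r • a := by
        rw [map_neg, map_add, AddMonoidHom.map_zsmul, hgval, smul_smul]
        have : (r : ℤ) • a = -(ι g') - (q * (m:ℤ)) • a := by
          have : k • a = (q * (m:ℤ)) • a + r • a := by rw [hkqr, add_smul]
          linear_combination (norm := abel) hk - this
        rw [this]; abel
      have hr0 : r = 0 := by
        by_contra hr0
        refine hmin r.toNat (by omega) ⟨by omega, -(g' + q • g), ?_⟩
        rw [Int.toNat_of_nonneg hrange.1]; exact hra
      refine ⟨q, ?_⟩
      have hgeq : g' = q • (-g) := by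
        apply hι
        rw [AddMonoidHom.map_zsmul, map_neg, hgval]
        have : k • a = (q * (m:ℤ)) • a := by rw [hkqr, hr0, add_zero]
        rw [smul_neg, smul_smul]
        have h2 : ι g' = -((q * (m:ℤ)) • a) := by
          rw [← this]; linear_combination (norm := abel) hk
        rw [h2]
      rw [Prod.smul_def]
      refine Prod.ext (by rw [hgeq]) ?_
      simp only [smul_eq_mul]
      omega
    · rintro ⟨q, hq⟩
      obtain ⟨hq1, hq2⟩ : q • (-g) = g' ∧ q * (m : ℤ) = k := by
        simpa [Prod.ext_iff] using hq
      simp only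
      rw [← hq1, ← hq2, AddMonoidHom.map_zsmul, map_neg, hgval, mul_smul, smul_neg, smul_smul,
        mul_comm]
      abel

/-- The kernel of `auxPhi` is determined by the invariant. -/
lemma auxKer_eq (ι1 : G →+ H1) (a1 : H1) (ι2 : G →+ H2) (a2 : H2)
    (hι1 : Injective ι1) (hι2 : Injective ι2)
    (h : auxInv ι1 a1 = auxInv ι2 a2) :
    (auxPhi ι1 a1).ker = (auxPhi ι2 a2).ker := by
  rcases ho : auxInv ι2 a2 with _ | ⟨m, g⟩
  · rw [auxKer_of_none ι1 a1 hι1 (h.trans ho), auxKer_of_none ι2 a2 hι2 ho]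
  · rw [auxKer_of_some ι1 a1 hι1 (h.trans ho), auxKer_of_some ι2 a2 hι2 ho]

/-- The main construction: equal kernels give an isomorphism compatible with `auxPhi`. -/
lemma aux_iso (ι1 : G →+ H1) (a1 : H1) (ι2 : G →+ H2) (a2 : H2)
    (hk : (auxPhi ι1 a1).ker = (auxPhi ι2 a2).ker) :
    ∃ f : ↥(closure (Set.range ι1 ∪ {a1})) ≃+ ↥(closure (Set.range ι2 ∪ {a2})),
      ∀ (p : G × ℤ) (y : ↥(closure (Set.range ι1 ∪ {a1}))),
        (y : H1) = auxPhi ι1 a1 p → (f y : H2) = auxPhi ι2 a2 p := by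
  let e1 : ↥(closure (Set.range ι1 ∪ {a1})) ≃+ ↥(auxPhi ι1 a1).range :=
    AddEquiv.addSubgroupCongr (auxPhi_range ι1 a1).symm
  let e2 : ↥(auxPhi ι1 a1).range ≃+ (G × ℤ) ⧸ (auxPhi ι1 a1).ker :=
    (QuotientAddGroup.quotientKerEquivRange (auxPhi ι1 a1)).symm
  let e3 : (G × ℤ) ⧸ (auxPhi ι1 a1).ker ≃+ (G × ℤ) ⧸ (auxPhi ι2 a2).ker :=
    QuotientAddGroup.quotientAddEquivOfEq hk
  let e4 : (G × ℤ) ⧸ (auxPhi ι2 a2).ker ≃+ ↥(auxPhi ι2 a2).range :=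
    QuotientAddGroup.quotientKerEquivRange (auxPhi ι2 a2)
  let e5 : ↥(auxPhi ι2 a2).range ≃+ ↥(closure (Set.range ι2 ∪ {a2})) :=
    AddEquiv.addSubgroupCongr (auxPhi_range ι2 a2)
  refine ⟨e1.trans (e2.trans (e3.trans (e4.trans e5))), ?_⟩
  intro p y hy
  have h1 : e1 y = ⟨auxPhi ι1 a1 p, ⟨p, rfl⟩⟩ := Subtype.ext hy
  have hmk1 : QuotientAddGroup.quotientKerEquivRange (auxPhi ι1 a1)
      (QuotientAddGroup.mk p) = ⟨auxPhi ι1 a1 p, ⟨p, rfl⟩⟩ := rfl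
  have h2 : e2 (e1 y) = QuotientAddGroup.mk p := by
    rw [h1]
    exact ((QuotientAddGroup.quotientKerEquivRange (auxPhi ι1 a1)).symm_apply_eq).2 hmk1.symm
  have h3 : e3 (e2 (e1 y)) = QuotientAddGroup.mk p := by
    rw [h2]; exact QuotientAddGroup.quotientAddEquivOfEq_mk hk p
  have h4 : e4 (e3 (e2 (e1 y))) = ⟨auxPhi ι2 a2 p, ⟨p, rfl⟩⟩ := by rw [h3]; rfl
  show ((e5 (e4 (e3 (e2 (e1 y))))) : H2) = auxPhi ι2 a2 p
  rw [h4]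
  rfl

end Aux

/-- If `G` is an infinite abelian group and `(H i, a i)_{i ∈ I}` is a family of abelian
groups containing `G` (via embeddings `ι i`) with distinguished elements, and `|I| > |G|`,
then there are `i ≠ j` and an isomorphism `f : ⟨G ∪ {a i}⟩ ≅ ⟨G ∪ {a j}⟩` fixing `G`
(i.e. commuting with the embeddings) and sending `a i` to `a j`. -/
theorem exists_iso_over_subgroup_of_large_family
    {G : Type u} [AddCommGroup G] [Infinite G]
    {I : Type u} (hI : Cardinal.mk G < Cardinal.mk I)
    (H : I → Type u) [∀ i, AddCommGroup (H i)]
    (ι : (i : I) → G →+ H i) (hι : ∀ i, Function.Injective (ι i))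
    (a : (i : I) → H i) :
    ∃ i j : I, i ≠ j ∧
      ∃ f : ↥(AddSubgroup.closure (Set.range (ι i) ∪ {a i})) ≃+
            ↥(AddSubgroup.closure (Set.range (ι j) ∪ {a j})),
        (∀ (x : G) (y : ↥(AddSubgroup.closure (Set.range (ι i) ∪ {a i}))),
            (y : H i) = ι i x → (f y : H j) = ι j x) ∧
        (∀ y : ↥(AddSubgroup.closure (Set.range (ι i) ∪ {a i})),
            (y : H i) = a i → (f y : H j) = a j) := by
  have hcard : Cardinal.mk (Option (ℕ × G)) ≤ Cardinal.mk G := by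
    have hG : Cardinal.aleph0 ≤ Cardinal.mk G := Cardinal.infinite_iff.1 inferInstance
    have h1 : Cardinal.mk (ℕ × G) = Cardinal.mk G := by
      rw [Cardinal.mk_prod, Cardinal.mk_nat, Cardinal.lift_aleph0, Cardinal.lift_uzero]
      exact Cardinal.aleph0_mul_eq hG
    rw [Cardinal.mk_option, h1, Cardinal.add_one_eq hG]
  have hnotinj : ¬ Function.Injective (fun i => auxInv (ι i) (a i)) := by
    intro hinj
    exact absurd ((Cardinal.mk_le_of_injective hinj).trans hcard) hI.not_ge
  rw [Function.not_injective_iff] at hnotinj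
  obtain ⟨i, j, hij, hne⟩ := hnotinj
  refine ⟨i, j, hne, ?_⟩
  obtain ⟨f, hf⟩ := aux_iso (ι i) (a i) (ι j) (a j)
    (auxKer_eq _ _ _ _ (hι i) (hι j) hij)
  refine ⟨f, ?_, ?_⟩
  · intro x y hy
    have := hf (x, 0) y (by simp [auxPhi_apply, hy])
    simpa [auxPhi_apply] using this
  · intro y hy
    have := hf (0, 1) y (by simp [auxPhi_apply, hy])
    simpa [auxPhi_apply] using this
end

section
/- Let G be a torsion-free abelian group and E a countable system of ℤ-linear equations over G that is finitely solvable in G but has no solution in G. Then there exists a countable pure subgroup H of G containing all the constants of E such that E is finitely solvable in H but has no solution in H. -/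
/-- If a countable system of `ℤ`-linear equations over a torsion-free abelian group `G`
is finitely solvable in `G` but not solvable in `G`, then there is a countable pure
subgroup `H` of `G` containing the constants in which the system is finitely solvable but
not solvable. -/
theorem exists_countable_pure_subgroup_finitelySolvable_not_solvable
    {G : Type*} [AddCommGroup G] [NoZeroSMulDivisors ℤ G]
    (E : LinearSystem G)
    (hfs : ∀ s : Finset ℕ, ∃ x : ℕ → G,
      ∀ i ∈ s, ∑ j : Fin (E.len i), E.coeff i j • x (E.var i j) = E.const i)
    (hns : ¬ ∃ x : ℕ → G, ∀ i : ℕ, ∑ j : Fin (E.len i), E.coeff i j • x (E.var i j) = E.const i) :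
    ∃ H : AddSubgroup G, Countable ↥H ∧ H.IsPure ∧ (∀ i : ℕ, E.const i ∈ H) ∧
      (∀ s : Finset ℕ, ∃ x : ℕ → G, (∀ m, x m ∈ H) ∧
        ∀ i ∈ s, ∑ j : Fin (E.len i), E.coeff i j • x (E.var i j) = E.const i) ∧
      ¬ ∃ x : ℕ → G, (∀ m, x m ∈ H) ∧
        ∀ i : ℕ, ∑ j : Fin (E.len i), E.coeff i j • x (E.var i j) = E.const i := by
  classical
  choose xfun hxfun using hfs
  -- index type for generators
  set e : (ℕ ⊕ (Finset ℕ × ℕ)) → G := Sum.elim E.const (fun p => xfun p.1 p.2) with he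
  set φ : ((ℕ ⊕ (Finset ℕ × ℕ)) →₀ ℤ) →+ G :=
    Finsupp.liftAddHom (fun i => zmultiplesHom G (e i)) with hφ
  set H0 : AddSubgroup G := φ.range with hH0
  have hH0count : (H0 : Set G).Countable := by
    have : Countable ((ℕ ⊕ (Finset ℕ × ℕ)) →₀ ℤ) := inferInstance
    exact Set.countable_range _
  have heH0 : ∀ i, e i ∈ H0 := by
    intro i
    refine ⟨Finsupp.single i 1, ?_⟩
    simp [hφ, Finsupp.liftAddHom_apply_single]
  -- the pure closure of H0
  set H : AddSubgroup G :=
    { carrier := {g | ∃ n : ℕ, 0 < n ∧ n • g ∈ H0}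
      zero_mem' := ⟨1, one_pos, by rw [smul_zero]; exact zero_mem _⟩
      add_mem' := by
        rintro a b ⟨n, hn, ha⟩ ⟨m, hm, hb⟩
        refine ⟨n * m, Nat.mul_pos hn hm, ?_⟩
        have : (n * m) • (a + b) = m • (n • a) + n • (m • b) := by
          rw [smul_add, mul_smul, mul_smul, smul_comm n m a]
        rw [this]
        exact add_mem (AddSubgroup.nsmul_mem _ ha m) (AddSubgroup.nsmul_mem _ hb n)
      neg_mem' := by
        rintro a ⟨n, hn, ha⟩
        exact ⟨n, hn, by rw [smul_neg]; exact neg_mem ha⟩ } with hH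
  have hH0H : ∀ g ∈ H0, g ∈ H := fun g hg => ⟨1, one_pos, by simpa using hg⟩
  refine ⟨H, ?_, ?_, ?_, ?_, ?_⟩
  · -- countability
    have : (H : Set G).Countable := by
      have : (H : Set G) = ⋃ n : ℕ, {g : G | 0 < n ∧ n • g ∈ H0} := by
        ext g
        simp only [Set.mem_iUnion, Set.mem_setOf_eq]
        exact Iff.rfl
      rw [this]
      refine Set.countable_iUnion fun n => ?_
      rcases Nat.eq_zero_or_pos n with rfl | hn
      · convert Set.countable_empty
        ext g; simp
      · have hsub : {g : G | 0 < n ∧ n • g ∈ H0} ⊆ (fun g : G => n • g) ⁻¹' (H0 : Set G) :=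
          fun g hg => hg.2
        refine Set.Countable.mono hsub (Set.Countable.preimage hH0count ?_)
        intro a b hab
        have hab' : (n : ℤ) • a = (n : ℤ) • b := by
          simpa [natCast_zsmul] using hab
        exact smul_right_injective G (by exact_mod_cast hn.ne' : (n : ℤ) ≠ 0) hab'
    exact this.to_subtype
  · -- purity
    intro n h hh hg
    rcases Nat.eq_zero_or_pos n with rfl | hn
    · rcases hg with ⟨g, hg⟩
      refine ⟨0, zero_mem _, ?_⟩
      rw [← hg]; simp
    · rcases hg with ⟨g, rfl⟩
      rcases hh with ⟨m, hm, hmg⟩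
      refine ⟨g, ⟨n * m, Nat.mul_pos hn hm, ?_⟩, rfl⟩
      rw [mul_comm, mul_smul]
      exact hmg
  · -- constants
    intro i
    exact hH0H _ (heH0 (Sum.inl i))
  · -- finite solvability in H
    intro s
    refine ⟨xfun s, fun m => hH0H _ (heH0 (Sum.inr (s, m))), hxfun s⟩
  · -- no solution in H
    rintro ⟨x, _, hx⟩
    exact hns ⟨x, hx⟩
end
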